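/- Quantitative substitution: if Γ, x:T ⊢ t : G is derivable with derivation π_t and ⊢ u : T is derivable with derivation π_u (u closed), then Γ ⊢ t{x := u} : G is derivable with a derivation of size |π_t| + |π_u| − length(leaves(T)). -/

import Mathlib

/-! # Tree intersection types -/

mutual
/-- Linear types: `A ::= ⋆ | T → A`. -/
inductive LinTy : Type where
  | star : LinTy
  | arr : TreeTy → LinTy → LinTy
/-- Generic types: linear types or tree types. -/
inductive GenTy : Type where
  | lin : LinTy → GenTy
  | tree : TreeTy → GenTy
/-- Tree types: finite sequences of generic types. -/
inductive TreeTy : Type where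
  | node : List GenTy → TreeTy
end

mutual
/-- Leaves of a generic type. -/
def GenTy.leaves : GenTy → List LinTy
  | .lin A => [A]
  | .tree T => TreeTy.leaves T
  termination_by g => sizeOf g
/-- Leaves extraction on tree types. -/
def TreeTy.leaves : TreeTy → List LinTy
  | .node gs => gs.attach.flatMap (fun g => GenTy.leaves g.1)
  termination_by T => sizeOf T
  decreasing_by simp_wf; have := List.sizeOf_lt_of_mem g.2; omega
end

/-- Concatenation `⊎` of tree types (sequences). -/
def TreeTy.cat : TreeTy → TreeTy → TreeTy
  | .node a, .node b => .node (a ++ b)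

mutual
/-- Weight (size) of a linear type, with parameter `X`. -/
def LinTy.weight (X : ℕ) : LinTy → ℕ
  | .star => 0
  | .arr T A => max (TreeTy.weight X T) (LinTy.weight X A + 1)
  termination_by A => sizeOf A
def GenTy.weight (X : ℕ) : GenTy → ℕ
  | .lin A => LinTy.weight X A
  | .tree T => TreeTy.weight X T
  termination_by g => sizeOf g
def TreeTy.weight (X : ℕ) : TreeTy → ℕ
  | .node gs => X + (gs.attach.map (fun g => GenTy.weight X g.1)).foldr max 0
  termination_by T => sizeOf T
  decreasing_by simp_wf; have := List.sizeOf_lt_of_mem g.2; omega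
end

mutual
/-- Hereditary absence of empty sequences (every leaf context ends in `⋆`). -/
inductive LinTy.Good : LinTy → Prop where
  | star : LinTy.Good .star
  | arr {T A} : TreeTy.Good T → LinTy.Good A → LinTy.Good (.arr T A)
inductive GenTy.Good : GenTy → Prop where
  | lin {A} : LinTy.Good A → GenTy.Good (.lin A)
  | tree {T} : TreeTy.Good T → GenTy.Good (.tree T)
inductive TreeTy.Good : TreeTy → Prop where
  | node {gs : List GenTy} : gs ≠ [] → (∀ g ∈ gs, GenTy.Good g) → TreeTy.Good (.node gs)
end

/-! ## Leaf contexts -/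

/-- One-hole contexts into tree types whose hole sits at a leaf position. -/
inductive LeafCtx : Type where
  | here (l r : List GenTy) : LeafCtx
  | deeper (l : List GenTy) (L : LeafCtx) (r : List GenTy) : LeafCtx

/-- Plugging a linear type into a leaf context. -/
def LeafCtx.plug : LeafCtx → LinTy → TreeTy
  | .here l r, A => .node (l ++ .lin A :: r)
  | .deeper l L r, A => .node (l ++ .tree (L.plug A) :: r)

/-- Number of leaves strictly to the left of the hole. -/
def LeafCtx.holeIdx : LeafCtx → ℕ
  | .here l _ => (TreeTy.node l).leaves.length
  | .deeper l L _ => (TreeTy.node l).leaves.length + L.holeIdx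

/-! ## Type contexts -/

mutual
/-- Linear type contexts: `𝕃c ::= ⟨·⟩ | T → 𝕃c | 𝕋 → A`. -/
inductive LinCtx : Type where
  | hole : LinCtx
  | arrR : TreeTy → LinCtx → LinCtx
  | arrL : TreeCtx → LinTy → LinCtx
/-- Tree type contexts. -/
inductive TreeCtx : Type where
  | node : List GenTy → GenCtx → List GenTy → TreeCtx
/-- Generic type contexts. -/
inductive GenCtx : Type where
  | lin : LinCtx → GenCtx
  | tree : TreeCtx → GenCtx
end

mutual
def LinCtx.plug : LinCtx → LinTy → LinTy
  | .hole, B => B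
  | .arrR T C, B => .arr T (C.plug B)
  | .arrL C A, B => .arr (C.plug B) A
def TreeCtx.plug : TreeCtx → LinTy → TreeTy
  | .node l C r, B => .node (l ++ C.plug B :: r)
def GenCtx.plug : GenCtx → LinTy → GenTy
  | .lin C, B => .lin (C.plug B)
  | .tree C, B => .tree (C.plug B)
end

mutual
/-- Branch size of a linear type context. -/
def LinCtx.bsize (X : ℕ) : LinCtx → ℕ
  | .hole => 0
  | .arrR _ C => 1 + C.bsize X
  | .arrL C _ => C.bsize X
def TreeCtx.bsize (X : ℕ) : TreeCtx → ℕ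
  | .node _ C _ => X + C.bsize X
def GenCtx.bsize (X : ℕ) : GenCtx → ℕ
  | .lin C => C.bsize X
  | .tree C => C.bsize X
end

/-! # λ-terms (de Bruijn) and Closed Call-by-Name -/

inductive Term : Type where
  | var : ℕ → Term
  | lam : Term → Term
  | app : Term → Term → Term

/-- Shifting of free indices `≥ c` by `d`. -/
def Term.lift (d : ℕ) : ℕ → Term → Term
  | c, .var n => if n < c then .var n else .var (n + d)
  | c, .lam t => .lam (Term.lift d (c+1) t)
  | c, .app t u => .app (Term.lift d c t) (Term.lift d c u)

/-- Capture-avoiding substitution of `u` for index `k`. -/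
def Term.subst (u : Term) : ℕ → Term → Term
  | k, .var n => if n = k then Term.lift k 0 u else if k < n then .var (n-1) else .var n
  | k, .lam t => .lam (Term.subst u (k+1) t)
  | k, .app t s => .app (Term.subst u k t) (Term.subst u k s)

/-- `t{x₀ := u}`. -/
def Term.subst0 (t u : Term) : Term := Term.subst u 0 t

def Term.ClosedUnder : Term → ℕ → Prop
  | .var n, k => n < k
  | .lam t, k => t.ClosedUnder (k+1)
  | .app t u, k => t.ClosedUnder k ∧ u.ClosedUnder k

/-- Closed terms: no free variables. -/
def Term.Closed (t : Term) : Prop := t.ClosedUnder 0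

/-- Occurrence of a free variable. -/
def Term.FreeIn : Term → ℕ → Prop
  | .var n, x => n = x
  | .lam t, x => t.FreeIn (x+1)
  | .app t u, x => t.FreeIn x ∨ u.FreeIn x

/-- Weak head reduction `(λy.t)u r₁…r_h →wh t{y:=u} r₁…r_h`. -/
inductive Whr : Term → Term → Prop where
  | beta (t u : Term) : Whr (.app (.lam t) u) (t.subst0 u)
  | appL {t t' : Term} (u : Term) : Whr t t' → Whr (.app t u) (.app t' u)

/-- `n`-step weak head reduction. -/
inductive WhN : ℕ → Term → Term → Prop where
  | refl (t : Term) : WhN 0 t t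
  | step {n t u v} : Whr t u → WhN n u v → WhN (n+1) t v

/-! # Type environments and the tree type system -/

/-- Type environments: maps from (de Bruijn) variables to tree types. -/
def Env : Type := ℕ → TreeTy

def Env.empty : Env := fun _ => .node []

/-- Pointwise concatenation `Γ ⊎ Δ`. -/
def Env.union (Γ Δ : Env) : Env := fun x => (Γ x).cat (Δ x)

/-- Environment of the variable axiom: `x : [A]`. -/
def Env.single (x : ℕ) (A : LinTy) : Env :=
  fun y => if y = x then .node [.lin A] else .node []

/-- Environment extension `Γ, x₀:T` (de Bruijn cons). -/
def Env.cons (T : TreeTy) (Γ : Env) : Env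
  | 0 => T
  | n+1 => Γ n

/-- Wrap a (non-empty) tree type in one extra sequence layer. -/
def TreeTy.wrap : TreeTy → TreeTy
  | .node [] => .node []
  | T => .node [.tree T]

/-- `[Γ]`: wrap each (non-empty) type of the environment in one extra layer. -/
def Env.wrap (Γ : Env) : Env := fun x => (Γ x).wrap

/-- Finite union of environments. -/
def Env.unionF {n : ℕ} (Γs : Fin n → Env) : Env :=
  (List.ofFn Γs).foldr Env.union Env.empty

/-- Tree type derivations. -/
inductive Deriv : Env → Term → GenTy → Type where
  | var (x : ℕ) (A : LinTy) : Deriv (Env.single x A) (.var x) (.lin A)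
  | lam {Γ : Env} {T : TreeTy} {t : Term} {A : LinTy} :
      Deriv (Env.cons T Γ) t (.lin A) → Deriv Γ (.lam t) (.lin (.arr T A))
  | lamStar (t : Term) : Deriv Env.empty (.lam t) (.lin .star)
  | app {Γ Δ : Env} {t u : Term} {T : TreeTy} {A : LinTy} :
      Deriv Γ t (.lin (.arr T A)) → Deriv Δ u (.tree T) →
      Deriv (Env.union Γ Δ) (.app t u) (.lin A)
  | many {t : Term} (n : ℕ) (Γs : Fin n → Env) (Gs : Fin n → GenTy)
      (prems : ∀ i, Deriv (Γs i) t (Gs i)) :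
      Deriv (Env.wrap (Env.unionF Γs)) t (.tree (.node (List.ofFn Gs)))
  | none (t : Term) : Deriv Env.empty t (.tree (.node []))

/-- Size of a derivation: number of rules that are not T-many/T-none. -/
def Deriv.size : ∀ {Γ t G}, Deriv Γ t G → ℕ
  | _, _, _, .var _ _ => 1
  | _, _, _, .lam π => π.size + 1
  | _, _, _, .lamStar _ => 1
  | _, _, _, .app π ρ => π.size + ρ.size + 1
  | _, _, _, .many n _ _ prems => ∑ i : Fin n, (prems i).size
  | _, _, _, .none _ => 0

/-- Weight of a weighted derivation, with parameter `X`. -/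
def Deriv.weight (X : ℕ) : ∀ {Γ t G}, Deriv Γ t G → ℕ
  | _, _, _, .var _ A => A.weight X
  | _, _, _, .lam (T := T) (A := A) π => max (π.weight X) (LinTy.weight X (.arr T A))
  | _, _, _, .lamStar _ => 0
  | _, _, _, .app π ρ => max (π.weight X) (ρ.weight X)
  | _, _, _, .many n _ _ prems => X + (Finset.univ.sup fun i => (prems i).weight X)
  | _, _, _, .none _ => 0

/-- `SubD π n π'`: the judgment of `π'` occurs in `π`, crossing `n` T-many rules
descending from it to the root. -/
inductive SubD : ∀ {Γ t G}, Deriv Γ t G → ℕ → ∀ {Γ' u G'}, Deriv Γ' u G' → Prop where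
  | refl {Γ t G} (π : Deriv Γ t G) : SubD π 0 π
  | lam {Γ T t A} {π : Deriv (Env.cons T Γ) t (.lin A)} {n} {Γ' u G'} {π' : Deriv Γ' u G'} :
      SubD π n π' → SubD (Deriv.lam π) n π'
  | appL {Γ Δ t u T A} {π : Deriv Γ t (.lin (.arr T A))} {ρ : Deriv Δ u (.tree T)}
      {n} {Γ' v G'} {π' : Deriv Γ' v G'} :
      SubD π n π' → SubD (Deriv.app π ρ) n π'
  | appR {Γ Δ t u T A} {π : Deriv Γ t (.lin (.arr T A))} {ρ : Deriv Δ u (.tree T)}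
      {n} {Γ' v G'} {π' : Deriv Γ' v G'} :
      SubD ρ n π' → SubD (Deriv.app π ρ) n π'
  | many {t k} {Γs : Fin k → Env} {Gs : Fin k → GenTy} {prems : ∀ i, Deriv (Γs i) t (Gs i)}
      (i : Fin k) {n} {Γ' u G'} {π' : Deriv Γ' u G'} :
      SubD (prems i) n π' → SubD (Deriv.many k Γs Gs prems) (n+1) π'

/-!
Generalise to substitution at an arbitrary de Bruijn index `k` and induct on `π_t`. In the
empty environment a derivation of a tree type is exactly a family of derivations of its
components, with sizes adding up, so `π_u` splits along `T = T₁ ⊎ T₂` at T-@ and along the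
premises at T-many. At an axiom `x : [A]` the tree `[A]` has one leaf, and the axiom (size 1)
is replaced by the derivation of `u : A` extracted from `π_u`; every other axiom forces
`T = []`, whose derivations have size 0. Since `u` is closed, the lifting performed by
substitution under binders leaves it unchanged.
-/

theorem Term.lift_of_closedUnder :
    ∀ {t : Term} {d c : ℕ}, t.ClosedUnder c → t.lift d c = t
  | .var n, d, c, h => by simp only [Term.ClosedUnder] at h; simp [Term.lift, h]
  | .lam t, d, c, h => by simp [Term.lift, Term.lift_of_closedUnder (t := t) h]
  | .app t u, d, c, h => by
      simp [Term.lift, Term.lift_of_closedUnder (t := t) h.1,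
        Term.lift_of_closedUnder (t := u) h.2]

theorem Term.subst_var_self_of_closed {u : Term} (hu : u.Closed) (k : ℕ) :
    Term.subst u k (.var k) = u := by
  simp [Term.subst, Term.lift_of_closedUnder hu]

theorem Term.subst_var_of_ne (u : Term) {x k : ℕ} (h : x ≠ k) :
    Term.subst u k (.var x) = .var (if k < x then x - 1 else x) := by
  simp only [Term.subst, if_neg h]
  split_ifs <;> rfl

namespace TreeTy

theorem leaves_node (gs : List GenTy) : (node gs).leaves = gs.flatMap GenTy.leaves := by
  rw [TreeTy.leaves]
  simp [List.flatMap]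

theorem leaves_cat : ∀ S T : TreeTy, (S.cat T).leaves = S.leaves ++ T.leaves
  | .node _, .node _ => by simp [TreeTy.cat, leaves_node]

theorem leaves_wrap : ∀ T : TreeTy, T.wrap.leaves = T.leaves
  | .node [] => rfl
  | .node (g :: gs) => by
      rw [show (node (g :: gs)).wrap = node [.tree (node (g :: gs))] from rfl]
      simp [leaves_node, GenTy.leaves]

theorem cat_eq_nil : ∀ {S T : TreeTy}, S.cat T = node [] → S = node [] ∧ T = node []
  | .node _, .node _, h => by simpa [TreeTy.cat] using h

theorem eq_nil_of_wrap_eq_nil : ∀ {T : TreeTy}, T.wrap = node [] → T = node []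
  | .node [], _ => rfl
  | .node (_ :: _), h => by simp [TreeTy.wrap] at h

end TreeTy

namespace Env

def removeAt (k : ℕ) (Δ : Env) : Env := fun n => Δ (if n < k then n else n + 1)

theorem removeAt_zero_cons (T : TreeTy) (Γ : Env) : (cons T Γ).removeAt 0 = Γ := by
  funext n
  simp [removeAt, cons]

theorem removeAt_succ_cons (k : ℕ) (T : TreeTy) (Δ : Env) :
    (cons T Δ).removeAt (k + 1) = cons T (Δ.removeAt k) := by
  funext n
  cases n with
  | zero => simp [removeAt, cons]
  | succ n => by_cases h : n < k <;> simp [removeAt, cons, h]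

theorem removeAt_union (k : ℕ) (Γ Δ : Env) :
    (union Γ Δ).removeAt k = union (Γ.removeAt k) (Δ.removeAt k) := rfl

theorem removeAt_wrap (k : ℕ) (Γ : Env) : Γ.wrap.removeAt k = (Γ.removeAt k).wrap := rfl

theorem single_apply_self (x : ℕ) (A : LinTy) : single x A x = .node [.lin A] := if_pos rfl

theorem single_apply_of_ne {x k : ℕ} (A : LinTy) (h : x ≠ k) : single x A k = .node [] :=
  if_neg (Ne.symm h)

theorem removeAt_single_self (x : ℕ) (A : LinTy) : (single x A).removeAt x = empty := by
  funext n
  simp only [removeAt, single, empty]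
  split_ifs <;> first | rfl | omega

theorem removeAt_single_of_ne {x k : ℕ} (A : LinTy) (h : x ≠ k) :
    (single x A).removeAt k = single (if k < x then x - 1 else x) A := by
  funext n
  simp only [removeAt, single]
  split_ifs <;> first | rfl | omega

theorem union_eq_empty {Γ Δ : Env} (h : union Γ Δ = empty) : Γ = empty ∧ Δ = empty :=
  ⟨funext fun x => (TreeTy.cat_eq_nil (congrFun h x)).1,
    funext fun x => (TreeTy.cat_eq_nil (congrFun h x)).2⟩

theorem eq_empty_of_wrap_eq_empty {Γ : Env} (h : Γ.wrap = empty) : Γ = empty :=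
  funext fun x => TreeTy.eq_nil_of_wrap_eq_nil (congrFun h x)

theorem wrap_empty : empty.wrap = empty := rfl

theorem unionF_zero (Γs : Fin 0 → Env) : unionF Γs = empty := rfl

theorem unionF_succ {m : ℕ} (Γs : Fin (m + 1) → Env) :
    unionF Γs = union (Γs 0) (unionF fun i => Γs i.succ) := by
  simp [unionF, List.ofFn_succ]

theorem unionF_const_empty : ∀ m : ℕ, unionF (fun _ : Fin m => empty) = empty
  | 0 => rfl
  | m + 1 => by rw [unionF_succ, unionF_const_empty m]; rfl

theorem eq_empty_of_unionF_eq_empty :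
    ∀ {m : ℕ} {Γs : Fin m → Env}, unionF Γs = empty → ∀ i, Γs i = empty
  | 0, _, _, i => i.elim0
  | m + 1, Γs, h, i => by
      rw [unionF_succ] at h
      obtain ⟨h₀, hs⟩ := union_eq_empty h
      exact Fin.cases h₀ (eq_empty_of_unionF_eq_empty hs) i

theorem removeAt_unionF (k : ℕ) :
    ∀ {m : ℕ} (Γs : Fin m → Env),
      (unionF Γs).removeAt k = unionF fun i => (Γs i).removeAt k
  | 0, _ => rfl
  | m + 1, Γs => by
      rw [unionF_succ, unionF_succ, removeAt_union, removeAt_unionF k]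

theorem length_leaves_unionF (x : ℕ) :
    ∀ {m : ℕ} (Γs : Fin m → Env),
      (unionF Γs x).leaves.length = ∑ i, (Γs i x).leaves.length
  | 0, _ => by simp [unionF_zero, empty, TreeTy.leaves_node]
  | m + 1, Γs => by
      rw [unionF_succ, Fin.sum_univ_succ, ← length_leaves_unionF x]
      exact congrArg List.length (TreeTy.leaves_cat _ _) |>.trans (List.length_append ..)

end Env

namespace Deriv

variable {u : Term}

def cast {Γ Γ' : Env} {t : Term} {G G' : GenTy} (hΓ : Γ = Γ') (hG : G = G')
    (π : Deriv Γ t G) : Deriv Γ' t G' :=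
  hΓ ▸ hG ▸ π

@[simp] theorem size_cast {Γ Γ' : Env} {t : Term} {G G' : GenTy} (hΓ : Γ = Γ') (hG : G = G')
    (π : Deriv Γ t G) : (π.cast hΓ hG).size = π.size := by
  subst hΓ hG; rfl

/-- Only T-many and T-none conclude a tree type, and when the conclusion has the empty
environment so do all premises of T-many. -/
theorem exists_family {gs : List GenTy} (π : Deriv Env.empty u (.tree (.node gs))) :
    ∃ f : ∀ i : Fin gs.length, Deriv Env.empty u (gs.get i), ∑ i, (f i).size = π.size := by
  suffices ∀ {Γ G} (ρ : Deriv Γ u G), Γ = Env.empty → G = .tree (.node gs) →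
      ∃ f : ∀ i : Fin gs.length, Deriv Env.empty u (gs.get i), ∑ i, (f i).size = ρ.size from
    this π rfl rfl
  intro Γ G ρ hΓ hG
  cases ρ with
  | var | lam | lamStar | app => cases hG
  | none => cases hG; exact ⟨fun i => i.elim0, rfl⟩
  | many n Γs Gs prems =>
      cases hG
      have hemp := Env.eq_empty_of_unionF_eq_empty (Env.eq_empty_of_wrap_eq_empty hΓ)
      have hlen : (List.ofFn Gs).length = n := List.length_ofFn
      refine ⟨fun i => (prems (Fin.cast hlen i)).cast (hemp _) (List.get_ofFn Gs i).symm, ?_⟩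
      simp only [size_cast, Deriv.size]
      exact Fintype.sum_equiv (finCongr hlen) _ _ fun i => rfl

theorem exists_of_family {gs : List GenTy}
    (f : ∀ i : Fin gs.length, Deriv Env.empty u (gs.get i)) :
    ∃ π : Deriv Env.empty u (.tree (.node gs)), π.size = ∑ i, (f i).size := by
  refine ⟨(Deriv.many gs.length (fun _ => Env.empty) _ f).cast ?_ ?_, ?_⟩
  · rw [Env.unionF_const_empty, Env.wrap_empty]
  · rw [List.ofFn_get]
  · simp only [size_cast, Deriv.size]

theorem size_eq_zero_of_nil (π : Deriv Env.empty u (.tree (.node []))) : π.size = 0 := by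
  obtain ⟨f, hf⟩ := π.exists_family
  simpa using hf.symm

theorem exists_split_cons {g : GenTy} {gs : List GenTy}
    (π : Deriv Env.empty u (.tree (.node (g :: gs)))) :
    ∃ (π₁ : Deriv Env.empty u g) (π₂ : Deriv Env.empty u (.tree (.node gs))),
      π₁.size + π₂.size = π.size := by
  obtain ⟨f, hf⟩ := π.exists_family
  obtain ⟨π₂, h₂⟩ := exists_of_family (gs := gs) fun i => f i.succ
  exact ⟨f 0, π₂, by rw [h₂, ← hf]; exact (Fin.sum_univ_succ fun i => (f i).size).symm⟩

theorem exists_cons {g : GenTy} {gs : List GenTy} (π₁ : Deriv Env.empty u g)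
    (π₂ : Deriv Env.empty u (.tree (.node gs))) :
    ∃ π : Deriv Env.empty u (.tree (.node (g :: gs))), π.size = π₁.size + π₂.size := by
  obtain ⟨f, hf⟩ := π₂.exists_family
  obtain ⟨π, hπ⟩ := exists_of_family (gs := g :: gs)
    (Fin.cases (motive := fun i => Deriv Env.empty u ((g :: gs).get i)) π₁ f)
  refine ⟨π, ?_⟩
  rw [hπ, ← hf]
  exact Fin.sum_univ_succ _

theorem exists_of_singleton {g : GenTy} (π : Deriv Env.empty u (.tree (.node [g]))) :
    ∃ π' : Deriv Env.empty u g, π'.size = π.size := by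
  obtain ⟨π₁, π₂, h⟩ := π.exists_split_cons
  exact ⟨π₁, by rw [← h, size_eq_zero_of_nil π₂, Nat.add_zero]⟩

theorem exists_split_cat :
    ∀ {S T : TreeTy} (π : Deriv Env.empty u (.tree (S.cat T))),
      ∃ (π₁ : Deriv Env.empty u (.tree S)) (π₂ : Deriv Env.empty u (.tree T)),
        π₁.size + π₂.size = π.size
  | .node [], .node _, π => ⟨.none u, π, Nat.zero_add _⟩
  | .node (_ :: l), .node l', π => by
      obtain ⟨π₀, ρ, hρ⟩ := exists_split_cons π
      obtain ⟨ρ₁, ρ₂, hρ'⟩ := exists_split_cat (S := .node l) (T := .node l') ρ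
      obtain ⟨π₁, hπ₁⟩ := exists_cons π₀ ρ₁
      exact ⟨π₁, ρ₂, by rw [hπ₁, add_assoc, hρ']; exact hρ⟩

theorem exists_of_wrap {T : TreeTy} (π : Deriv Env.empty u (.tree T.wrap)) :
    ∃ π' : Deriv Env.empty u (.tree T), π'.size = π.size :=
  match T, π with
  | .node [], π => ⟨π, rfl⟩
  | .node (_ :: _), π => exists_of_singleton π

theorem exists_split_unionF (x : ℕ) :
    ∀ {m : ℕ} (Γs : Fin m → Env) (π : Deriv Env.empty u (.tree (Env.unionF Γs x))),
      ∃ f : ∀ i, Deriv Env.empty u (.tree (Γs i x)), ∑ i, (f i).size = π.size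
  | 0, _, π => ⟨fun i => i.elim0, (size_eq_zero_of_nil π).symm⟩
  | m + 1, Γs, π => by
      revert π
      rw [Env.unionF_succ]
      intro π
      obtain ⟨π₀, ρ, h⟩ := exists_split_cat π
      obtain ⟨f, hf⟩ := exists_split_unionF x (fun i => Γs i.succ) ρ
      exact ⟨Fin.cases π₀ f, by
        rw [Fin.sum_univ_succ]; simp only [Fin.cases_zero, Fin.cases_succ, hf]; exact h⟩

theorem exists_subst_var (hu : u.Closed) (x : ℕ) (A : LinTy) (k : ℕ)
    (πu : Deriv Env.empty u (.tree (Env.single x A k))) :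
    ∃ π : Deriv ((Env.single x A).removeAt k) (Term.subst u k (.var x)) (.lin A),
      π.size + (Env.single x A k).leaves.length = (Deriv.var x A).size + πu.size := by
  rcases eq_or_ne x k with rfl | hxk
  · revert πu
    rw [Env.single_apply_self, Env.removeAt_single_self, Term.subst_var_self_of_closed hu]
    intro πu
    obtain ⟨π, hπ⟩ := πu.exists_of_singleton
    exact ⟨π, by simp [hπ, TreeTy.leaves_node, GenTy.leaves, Deriv.size, Nat.add_comm]⟩
  · revert πu
    rw [Env.single_apply_of_ne A hxk, Env.removeAt_single_of_ne A hxk, Term.subst_var_of_ne u hxk]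
    intro πu
    exact ⟨.var _ A, by simp [πu.size_eq_zero_of_nil, TreeTy.leaves_node, Deriv.size]⟩

theorem exists_subst (hu : u.Closed) {Δ : Env} {t : Term} {G : GenTy} (π : Deriv Δ t G)
    (k : ℕ) (πu : Deriv Env.empty u (.tree (Δ k))) :
    ∃ π' : Deriv (Δ.removeAt k) (Term.subst u k t) G,
      π'.size + (Δ k).leaves.length = π.size + πu.size := by
  induction π generalizing k with
  | var x A => exact exists_subst_var hu x A k πu
  | @lam Γ T t A π ih =>
      have h := ih (k + 1) πu
      rw [Env.removeAt_succ_cons] at h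
      obtain ⟨π', h⟩ := h
      have h : π'.size + (Γ k).leaves.length = π.size + πu.size := h
      refine ⟨.lam π', ?_⟩
      show π'.size + 1 + (Γ k).leaves.length = π.size + 1 + πu.size
      omega
  | lamStar t =>
      exact ⟨.lamStar _, by
        simp [size_eq_zero_of_nil πu, Env.empty, TreeTy.leaves_node, Deriv.size]⟩
  | none t =>
      exact ⟨.none _, by
        simp [size_eq_zero_of_nil πu, Env.empty, TreeTy.leaves_node, Deriv.size]⟩
  | @app Γ₁ Γ₂ t s T A π ρ ihπ ihρ =>
      obtain ⟨πu₁, πu₂, hsplit⟩ := exists_split_cat (S := Γ₁ k) (T := Γ₂ k) πu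
      have hsplit : πu₁.size + πu₂.size = πu.size := hsplit
      obtain ⟨π₁, h₁⟩ := ihπ k πu₁
      obtain ⟨π₂, h₂⟩ := ihρ k πu₂
      refine ⟨.app π₁ π₂, ?_⟩
      have hleaves := congrArg List.length (TreeTy.leaves_cat (Γ₁ k) (Γ₂ k))
      rw [List.length_append] at hleaves
      show π₁.size + π₂.size + 1 + ((Γ₁ k).cat (Γ₂ k)).leaves.length =
        π.size + ρ.size + 1 + πu.size
      omega
  | many n Γs Gs prems ih =>
      obtain ⟨πu', hπu'⟩ := exists_of_wrap (T := Env.unionF Γs k) πu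
      obtain ⟨fu, hfu⟩ := exists_split_unionF k Γs πu'
      choose π' hπ' using fun i => ih i k (fu i)
      rw [Env.removeAt_wrap, Env.removeAt_unionF]
      refine ⟨.many n _ Gs π', ?_⟩
      show ∑ i, (π' i).size + (Env.unionF Γs k).wrap.leaves.length =
        ∑ i, (prems i).size + πu.size
      rw [TreeTy.leaves_wrap, Env.length_leaves_unionF, ← Finset.sum_add_distrib,
        Finset.sum_congr rfl fun i _ => hπ' i, Finset.sum_add_distrib, hfu, hπu']
      rfl

end Deriv

/-- quantitative substitution. From `Γ, x:T ⊢ t : G` (derivation `πt`)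
and `⊢ u : T` (derivation `πu`, `u` closed) one gets `Γ ⊢ t{x := u} : G` with a
derivation of size `|πt| + |πu| − length (leaves T)`. -/
theorem quantitative_substitution {Γ : Env} {T : TreeTy} {t u : Term} {G : GenTy}
    (πt : Deriv (Env.cons T Γ) t G) (πu : Deriv Env.empty u (.tree T)) (hu : u.Closed) :
    ∃ π : Deriv Γ (t.subst0 u) G, π.size + T.leaves.length = πt.size + πu.size := by
  have h := Deriv.exists_subst hu πt 0 πu
  rwa [Env.removeAt_zero_cons] at h
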